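/- arXiv:2310.06034 — 5 statements merged into one kernel-verified Lean document; each statement's English description precedes it below -/
import Mathlib

section
/- Let N, M be natural numbers with 1 ≤ N ≤ M, and let n : Fin M → ℕ be an occupation vector. Define E(n) = N²·Σ_{j=1}^{N} n_j + Σ_{j=1}^{N} n_j² + N²(N+2)·Σ_{j=N+1}^{M} n_j. Then E(n) = N(N²+1) if and only if n_j = 1 for all j ≤ N and n_j = 0 for all j > N. (In other words, the collision-free Fock state |1⟩^{⊗N}|0⟩^{⊗(M−N)} is an eigenstate of the Hamiltonian H_NL = N²Σ_{j≤N} n̂_j + Σ_{j≤N} n̂_j² + N²(N+2)Σ_{j>N} n̂_j with a non-degenerate eigenvalue N(N²+1).) -/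
lemma card_filter_lt_fin (N M : ℕ) (hNM : N ≤ M) :
    (Finset.univ.filter (fun j : Fin M => (j : ℕ) < N)).card = N := by
  have : (Finset.univ.filter (fun j : Fin M => (j : ℕ) < N))
      = Finset.map (Fin.castLEEmb hNM) Finset.univ := by
    ext j
    simp only [Finset.mem_filter, Finset.mem_univ, true_and, Finset.mem_map,
      Fin.castLEEmb_apply]
    constructor
    · intro hj
      exact ⟨⟨j, hj⟩, rfl⟩
    · rintro ⟨i, rfl⟩
      exact i.2
  rw [this, Finset.card_map, Finset.card_univ, Fintype.card_fin]

/-- The collision-free Fock state `|1⟩^{⊗N}|0⟩^{⊗(M−N)}` is the unique occupation vector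
with energy `N(N²+1)` for the Hamiltonian
`H_NL = N²·Σ_{j≤N} n̂_j + Σ_{j≤N} n̂_j² + N²(N+2)·Σ_{j>N} n̂_j`. -/
theorem stmt_0 (N M : ℕ) (hN : 1 ≤ N) (hNM : N ≤ M) (n : Fin M → ℕ) :
    (N ^ 2 * ∑ j ∈ Finset.univ.filter (fun j : Fin M => (j : ℕ) < N), n j
      + ∑ j ∈ Finset.univ.filter (fun j : Fin M => (j : ℕ) < N), (n j) ^ 2
      + N ^ 2 * (N + 2) * ∑ j ∈ Finset.univ.filter (fun j : Fin M => N ≤ (j : ℕ)), n j)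
      = N * (N ^ 2 + 1)
    ↔ ((∀ j : Fin M, (j : ℕ) < N → n j = 1) ∧ (∀ j : Fin M, N ≤ (j : ℕ) → n j = 0)) := by
  set A := Finset.univ.filter (fun j : Fin M => (j : ℕ) < N) with hA
  set B := Finset.univ.filter (fun j : Fin M => N ≤ (j : ℕ)) with hB
  have hcard : A.card = N := card_filter_lt_fin N M hNM
  constructor
  · intro h
    set S := ∑ j ∈ A, n j with hS
    set Q := ∑ j ∈ A, n j ^ 2 with hQ
    set T := ∑ j ∈ B, n j with hT
    -- T = 0
    have hQS : S ≤ Q := Finset.sum_le_sum (fun j _ => Nat.le_self_pow two_ne_zero (n j))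
    have hQS2 : Q ≤ S * S := by
      calc Q ≤ ∑ j ∈ A, n j * S := by
              refine Finset.sum_le_sum (fun j hj => ?_)
              rw [pow_two]
              exact Nat.mul_le_mul_left _ (Finset.single_le_sum (fun i _ => Nat.zero_le _) hj)
        _ = S * S := by rw [← Finset.sum_mul, mul_comm]
    have hT0 : T = 0 := by
      by_contra hne
      have h2 : 1 ≤ T := Nat.one_le_iff_ne_zero.2 hne
      have e1 : N ^ 2 * (N + 2) * 1 ≤ N ^ 2 * (N + 2) * T := Nat.mul_le_mul_left _ h2
      have e2 : N * 1 ≤ N * N := Nat.mul_le_mul_left _ hN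
      have e3 : 1 * 1 ≤ N * N := Nat.mul_le_mul hN hN
      nlinarith [e1, e2, e3]
    rw [hT0] at h
    have hSN : S = N := by
      rcases lt_trichotomy S N with hlt | heq | hgt
      · exfalso
        have h1 : S + 1 ≤ N := hlt
        have e1 : (S + 1) * (S + 1) ≤ N * N := Nat.mul_le_mul h1 h1
        have e2 : N ^ 2 * (S + 1) ≤ N ^ 2 * N := Nat.mul_le_mul_left _ h1
        nlinarith [e1, e2]
      · exact heq
      · exfalso
        have h1 : N + 1 ≤ S := hgt
        have e2 : N ^ 2 * (N + 1) ≤ N ^ 2 * S := Nat.mul_le_mul_left _ h1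
        have e3 : 1 * 1 ≤ N * N := Nat.mul_le_mul hN hN
        nlinarith [e2, e3]
    rw [hSN] at h
    have hQN : Q = N := by nlinarith [h]
    -- pointwise on A
    have hpt : ∀ j ∈ A, n j = n j ^ 2 := by
      rw [← Finset.sum_eq_sum_iff_of_le (fun j _ => Nat.le_self_pow two_ne_zero (n j))]
      rw [← hS, ← hQ, hSN, hQN]
    have hle1 : ∀ j ∈ A, n j ≤ 1 := by
      intro j hj
      have := hpt j hj
      nlinarith [this]
    have hone : ∀ j ∈ A, n j = 1 := by
      have hsum1 : (∑ j ∈ A, n j) = ∑ j ∈ A, 1 := by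
        rw [← hS, hSN, Finset.sum_const, smul_eq_mul, mul_one, hcard]
      have := (Finset.sum_eq_sum_iff_of_le hle1).mp hsum1
      exact this
    constructor
    · intro j hj
      exact hone j (by simp [hA, hj])
    · intro j hj
      have := (Finset.sum_eq_zero_iff).mp hT0 j (by simp [hB, hj])
      exact this
  · rintro ⟨h1, h2⟩
    have hSA : (∑ j ∈ A, n j) = N := by
      rw [Finset.sum_congr rfl (fun j hj => h1 j (by simpa [hA] using hj))]
      simp [hcard]
    have hQA : (∑ j ∈ A, n j ^ 2) = N := by
      rw [Finset.sum_congr rfl (fun j hj => by rw [h1 j (by simpa [hA] using hj)])]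
      simp [hcard]
    have hTB : (∑ j ∈ B, n j) = 0 := by
      exact Finset.sum_eq_zero (fun j hj => h2 j (by simpa [hB] using hj))
    rw [hSA, hQA, hTB]
    ring
end

section
/- Let p : ℕ → ℝ be a nonnegative summable sequence and define A(t) = Σ_{j=0}^{∞} p_j e^{i j t} ∈ ℂ. Let J ≥ 1 and 0 ≤ j* < J be integers, let ε ≥ 0, and let Ã_0, …, Ã_{J−1} ∈ ℂ satisfy |Ã_k − A(2πk/J)| ≤ ε for every k < J. Then the quantity Q̃ = (1/J)·Σ_{k=0}^{J−1} Ã_k·e^{−2πi k j*/J} satisfies |Q̃ − p_{j*}| ≤ ε + Σ_{j ≥ J} p_j. -/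
theorem geom_aux (J : ℕ) (hJ : 1 ≤ J) (d : ℤ) :
    ∑ k ∈ Finset.range J, Complex.exp (2 * Real.pi * Complex.I * d / J) ^ k
      = if (J:ℤ) ∣ d then (J:ℂ) else 0 := by
  have hJ0 : (J:ℂ) ≠ 0 := by
    exact_mod_cast (Nat.one_le_iff_ne_zero.mp hJ)
  set x : ℂ := Complex.exp (2 * Real.pi * Complex.I * d / J) with hx
  by_cases h : (J:ℤ) ∣ d
  · obtain ⟨m, hm⟩ := h
    have : x = 1 := by
      rw [hx]
      have harg : (2 * Real.pi * Complex.I * d / J : ℂ) = m * (2 * Real.pi * Complex.I) := by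
        have : (d : ℂ) = (J : ℂ) * m := by exact_mod_cast congrArg Int.cast hm
        rw [this]; field_simp
      rw [harg, Complex.exp_int_mul_two_pi_mul_I]
    rw [if_pos ⟨m, hm⟩]; simp [this]
  · rw [if_neg h]
    have hx1 : x ≠ 1 := by
      rw [hx, Ne, Complex.exp_eq_one_iff]
      rintro ⟨n, hn⟩
      apply h
      refine ⟨n, ?_⟩
      have hπ : (Real.pi : ℂ) ≠ 0 := by exact_mod_cast Real.pi_ne_zero
      have hI := Complex.I_ne_zero
      have h2 : (2:ℂ) ≠ 0 := two_ne_zero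
      have : (d : ℂ) = (J : ℂ) * n := by
        apply mul_left_cancel₀ (mul_ne_zero (mul_ne_zero h2 hπ) hI)
        field_simp at hn
        linear_combination (2 * (Real.pi:ℂ) * Complex.I) * hn
      exact_mod_cast this
    have hxJ : x ^ J = 1 := by
      rw [hx, ← Complex.exp_nat_mul]
      have : (J:ℂ) * (2 * Real.pi * Complex.I * d / J) = d * (2 * Real.pi * Complex.I) := by
        field_simp
      rw [this, Complex.exp_int_mul_two_pi_mul_I]
    rw [geom_sum_eq hx1, hxJ]
    simp

/-- Error propagation in the discrete inverse Fourier estimate: if each amplitude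
`A(2πk/J)` is known up to additive error `ε`, the resulting estimate `Q̃` of `p_{j*}`
is accurate up to `ε` plus the aliasing tail `Σ_{j ≥ J} p_j`. -/
theorem stmt_9 (p : ℕ → ℝ) (hp : ∀ j, 0 ≤ p j) (hsum : Summable p)
    (A : ℝ → ℂ)
    (hA : ∀ t : ℝ, A t = ∑' j : ℕ, (p j : ℂ) * Complex.exp (Complex.I * (j : ℂ) * (t : ℂ)))
    (J : ℕ) (hJ : 1 ≤ J) (jstar : ℕ) (hjstar : jstar < J)
    (ε : ℝ) (hε : 0 ≤ ε) (Atil : ℕ → ℂ)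
    (hAtil : ∀ k < J, ‖Atil k - A (2 * Real.pi * k / J)‖ ≤ ε)
    (Qtil : ℂ)
    (hQtil : Qtil = (1 / (J : ℂ)) * ∑ k ∈ Finset.range J,
        Atil k *
          Complex.exp (-(2 * (Real.pi : ℂ) * Complex.I * (k : ℂ) * (jstar : ℂ) / (J : ℂ)))) :
    ‖Qtil - (p jstar : ℂ)‖ ≤ ε + ∑' m : ℕ, p (J + m) := by
  classical
  have hJ0 : (J:ℂ) ≠ 0 := by exact_mod_cast (Nat.one_le_iff_ne_zero.mp hJ)
  have hJR : (0:ℝ) < (J:ℝ) := by exact_mod_cast lt_of_lt_of_le Nat.zero_lt_one hJ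
  set χ : ℕ → ℝ := fun j => if (J:ℤ) ∣ ((j:ℤ) - (jstar:ℤ)) then (1:ℝ) else 0 with hχdef
  have hχ0 : ∀ j, 0 ≤ χ j := by
    intro j; simp only [hχdef]; split <;> norm_num
  have hχ1 : ∀ j, χ j ≤ 1 := by
    intro j; simp only [hχdef]; split <;> norm_num
  have hsχ : Summable (fun j => p j * χ j) := by
    apply hsum.of_nonneg_of_le (fun j => mul_nonneg (hp j) (hχ0 j))
    intro j
    calc p j * χ j ≤ p j * 1 := mul_le_mul_of_nonneg_left (hχ1 j) (hp j)
    _ = p j := mul_one _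
  set S : ℝ := ∑' j, p j * χ j with hSdef
  have habse : ∀ k : ℕ, ‖Complex.exp
      (-(2 * (Real.pi : ℂ) * Complex.I * (k : ℂ) * (jstar : ℂ) / (J : ℂ)))‖ = 1 := by
    intro k
    have harg : (-(2 * (Real.pi : ℂ) * Complex.I * (k : ℂ) * (jstar : ℂ) / (J : ℂ)))
        = ((-(2 * Real.pi * k * jstar / J) : ℝ) : ℂ) * Complex.I := by
      push_cast; ring
    rw [harg, Complex.norm_exp_ofReal_mul_I]
  -- summability of complex series
  have hsummC : ∀ k : ℕ, Summable (fun j : ℕ =>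
      (p j : ℂ) * Complex.exp (2 * Real.pi * Complex.I * (((j:ℤ) - (jstar:ℤ) : ℤ) : ℂ) / J) ^ k) := by
    intro k
    apply Summable.of_norm_bounded hsum
    intro j
    rw [norm_mul, norm_pow]
    have : ‖Complex.exp (2 * Real.pi * Complex.I * (((j:ℤ) - (jstar:ℤ) : ℤ) : ℂ) / J)‖ = 1 := by
      have h2 : (2 * Real.pi * Complex.I * (((j:ℤ) - (jstar:ℤ) : ℤ) : ℂ) / J : ℂ)
          = ((2 * Real.pi * ((j:ℝ) - (jstar:ℝ)) / J : ℝ) : ℂ) * Complex.I := by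
        push_cast; field_simp
      rw [h2]
      exact Complex.norm_exp_ofReal_mul_I _
    rw [this, one_pow, mul_one, Complex.norm_real, Real.norm_eq_abs, abs_of_nonneg (hp j)]
  -- each k-term
  have hterm : ∀ k ∈ Finset.range J,
      A (2 * Real.pi * k / J) *
          Complex.exp (-(2 * (Real.pi : ℂ) * Complex.I * (k : ℂ) * (jstar : ℂ) / (J : ℂ)))
        = ∑' j : ℕ, (p j : ℂ) * Complex.exp (2 * Real.pi * Complex.I * (((j:ℤ) - (jstar:ℤ) : ℤ) : ℂ) / J) ^ k := by
    intro k _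
    rw [hA, ← tsum_mul_right]
    apply tsum_congr
    intro j
    have harg : Complex.I * (j : ℂ) * (((2 * Real.pi * k / J : ℝ)) : ℂ)
          + (-(2 * (Real.pi : ℂ) * Complex.I * (k : ℂ) * (jstar : ℂ) / (J : ℂ)))
        = (k : ℕ) * (2 * Real.pi * Complex.I * (((j:ℤ) - (jstar:ℤ) : ℤ) : ℂ) / J) := by
      push_cast
      field_simp
      ring
    calc (p j : ℂ) * Complex.exp (Complex.I * (j : ℂ) * (((2 * Real.pi * k / J : ℝ)) : ℂ)) *
            Complex.exp (-(2 * (Real.pi : ℂ) * Complex.I * (k : ℂ) * (jstar : ℂ) / (J : ℂ)))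
        = (p j : ℂ) * Complex.exp (Complex.I * (j : ℂ) * (((2 * Real.pi * k / J : ℝ)) : ℂ)
            + (-(2 * (Real.pi : ℂ) * Complex.I * (k : ℂ) * (jstar : ℂ) / (J : ℂ)))) := by
          rw [Complex.exp_add]; ring
      _ = (p j : ℂ) * Complex.exp (2 * Real.pi * Complex.I * (((j:ℤ) - (jstar:ℤ) : ℤ) : ℂ) / J) ^ k := by
          rw [harg, Complex.exp_nat_mul]
  -- the exact sum
  have hkey : ∑ k ∈ Finset.range J, A (2 * Real.pi * k / J) *
      Complex.exp (-(2 * (Real.pi : ℂ) * Complex.I * (k : ℂ) * (jstar : ℂ) / (J : ℂ)))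
      = (J:ℂ) * (S : ℂ) := by
    rw [Finset.sum_congr rfl hterm, ← Summable.tsum_finsetSum (fun k _ => hsummC k)]
    have h1 : ∀ j : ℕ, (∑ k ∈ Finset.range J,
        (p j : ℂ) * Complex.exp (2 * Real.pi * Complex.I * (((j:ℤ) - (jstar:ℤ) : ℤ) : ℂ) / J) ^ k)
        = (J:ℂ) * ((p j * χ j : ℝ) : ℂ) := by
      intro j
      rw [← Finset.mul_sum, geom_aux J hJ ((j:ℤ) - (jstar:ℤ))]
      simp only [hχdef]
      split
      · push_cast; ring
      · push_cast; ring
    rw [tsum_congr h1, tsum_mul_left, hSdef, Complex.ofReal_tsum]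
  -- Qtil is close to S
  have hQS : ‖Qtil - (S:ℂ)‖ ≤ ε := by
    have : Qtil - (S:ℂ) = (1 / (J:ℂ)) * ∑ k ∈ Finset.range J, (Atil k - A (2 * Real.pi * k / J)) *
        Complex.exp (-(2 * (Real.pi : ℂ) * Complex.I * (k : ℂ) * (jstar : ℂ) / (J : ℂ))) := by
      rw [hQtil]
      have hS' : (S:ℂ) = (1 / (J:ℂ)) * ((J:ℂ) * (S:ℂ)) := by field_simp
      rw [hS', ← hkey, ← mul_sub, ← Finset.sum_sub_distrib]
      congr 1
      apply Finset.sum_congr rfl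
      intro k _
      rw [sub_mul]
    rw [this, norm_mul]
    have h1 : ‖1 / (J:ℂ)‖ = 1 / (J:ℝ) := by
      rw [norm_div, norm_one, Complex.norm_natCast]
    rw [h1]
    have h2 : ‖∑ k ∈ Finset.range J, (Atil k - A (2 * Real.pi * k / J)) * Complex.exp (-(2 * (Real.pi : ℂ) * Complex.I * (k : ℂ) * (jstar : ℂ) / (J : ℂ)))‖
        ≤ (J:ℝ) * ε := by
      calc ‖∑ k ∈ Finset.range J, (Atil k - A (2 * Real.pi * k / J)) * Complex.exp (-(2 * (Real.pi : ℂ) * Complex.I * (k : ℂ) * (jstar : ℂ) / (J : ℂ)))‖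
          ≤ ∑ k ∈ Finset.range J, ‖(Atil k - A (2 * Real.pi * k / J)) * Complex.exp (-(2 * (Real.pi : ℂ) * Complex.I * (k : ℂ) * (jstar : ℂ) / (J : ℂ)))‖ := by
            exact norm_sum_le _ _
        _ ≤ ∑ k ∈ Finset.range J, ε := by
            apply Finset.sum_le_sum
            intro k hk
            rw [norm_mul, habse k, mul_one]
            exact hAtil k (Finset.mem_range.mp hk)
        _ = (J:ℝ) * ε := by rw [Finset.sum_const, Finset.card_range, nsmul_eq_mul]
    calc (1 / (J:ℝ)) * ‖∑ k ∈ Finset.range J, (Atil k - A (2 * Real.pi * k / J)) * Complex.exp (-(2 * (Real.pi : ℂ) * Complex.I * (k : ℂ) * (jstar : ℂ) / (J : ℂ)))‖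
        ≤ (1 / (J:ℝ)) * ((J:ℝ) * ε) := by
          apply mul_le_mul_of_nonneg_left h2 (by positivity)
      _ = ε := by field_simp
  -- S is close to p jstar
  have hχjstar : χ jstar = 1 := by
    simp only [hχdef, sub_self]
    rw [if_pos (dvd_zero _)]
  have hSsplit : S = p jstar + ∑' j, if j = jstar then 0 else p j * χ j := by
    rw [hSdef, Summable.tsum_eq_add_tsum_ite hsχ jstar, hχjstar, mul_one]
  set R : ℝ := ∑' j, if j = jstar then 0 else p j * χ j with hRdef
  have hRnn : 0 ≤ R := by
    apply tsum_nonneg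
    intro j
    split
    · exact le_refl 0
    · exact mul_nonneg (hp j) (hχ0 j)
  set g : ℕ → ℝ := fun j => if J ≤ j then p j else 0 with hgdef
  have hgsum : Summable g := by
    apply hsum.of_nonneg_of_le
    · intro j; simp only [hgdef]; split; exacts [hp j, le_refl 0]
    · intro j; simp only [hgdef]; split; exacts [le_refl _, hp j]
  have hRle : R ≤ ∑' m : ℕ, p (J + m) := by
    have hT : ∑' m : ℕ, p (J + m) = ∑' j, g j := by
      rw [← Summable.sum_add_tsum_nat_add J hgsum]
      have hz : ∑ i ∈ Finset.range J, g i = 0 := by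
        apply Finset.sum_eq_zero
        intro i hi
        simp only [hgdef]
        rw [if_neg (not_le.mpr (Finset.mem_range.mp hi))]
      rw [hz, zero_add]
      apply tsum_congr
      intro m
      simp only [hgdef]
      rw [if_pos (Nat.le_add_left J m), Nat.add_comm]
    rw [hT, hRdef]
    apply Summable.tsum_le_tsum _ _ hgsum
    · intro j
      by_cases hj : j = jstar
      · rw [if_pos hj]
        simp only [hgdef]; split; exacts [hp j, le_refl 0]
      · rw [if_neg hj]
        simp only [hχdef, hgdef]
        by_cases hd : (J:ℤ) ∣ ((j:ℤ) - (jstar:ℤ))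
        · rw [if_pos hd, mul_one]
          have hd0 : (j:ℤ) - (jstar:ℤ) ≠ 0 := by omega
          have habs : (J:ℤ) ≤ |(j:ℤ) - (jstar:ℤ)| :=
            Int.le_of_dvd (abs_pos.mpr hd0) ((dvd_abs _ _).mpr hd)
          have hJj : J ≤ j := by
            rcases abs_cases ((j:ℤ) - (jstar:ℤ)) with ⟨he, _⟩ | ⟨he, _⟩ <;> omega
          rw [if_pos hJj]
        · rw [if_neg hd, mul_zero]
          split
          · exact hp j
          · exact le_refl 0
    · apply hsχ.of_nonneg_of_le
      · intro j; split; exacts [le_refl 0, mul_nonneg (hp j) (hχ0 j)]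
      · intro j; split; exacts [mul_nonneg (hp j) (hχ0 j), le_refl _]
  -- combine
  have hcombine : ‖(S:ℂ) - (p jstar : ℂ)‖ ≤ ∑' m : ℕ, p (J + m) := by
    rw [← Complex.ofReal_sub, Complex.norm_real, Real.norm_eq_abs]
    rw [hSsplit]
    rw [add_sub_cancel_left]
    rw [abs_of_nonneg hRnn]
    exact hRle
  calc ‖Qtil - (p jstar : ℂ)‖
      = ‖(Qtil - (S:ℂ)) + ((S:ℂ) - (p jstar : ℂ))‖ := by ring_nf
    _ ≤ ‖Qtil - (S:ℂ)‖ + ‖(S:ℂ) - (p jstar : ℂ)‖ := by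
        exact norm_add_le _ _
    _ ≤ ε + ∑' m : ℕ, p (J + m) := add_le_add hQS hcombine
end

section
/- Let r ∈ ℝ, let m ≥ 1 be a natural number, let τ > 0 be a real number with e^{2τ}·tanh²(r) < 1, and let N* ≥ 0 be real. Then Σ_{n : 2n > N*} C(m+n−1, n)·(cosh r)^{−2m}·(tanh r)^{2n} ≤ e^{−τ N*}·((cosh r)^{−2} / (1 − e^{2τ}·tanh²(r)))^{m}. -/
/-- Chernoff bound on the tail of the total photon number of `2m` squeezed vacuum states:
for `τ > 0` with `e^{2τ}·tanh²(r) < 1`, the probability that the photon number `2n`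
exceeds `N*` is at most `e^{−τN*}·(sech²(r)/(1 − e^{2τ}tanh²(r)))^m`. -/
theorem stmt_11 (r : ℝ) (m : ℕ) (hm : 1 ≤ m) (τ : ℝ) (hτ : 0 < τ)
    (hτt : Real.exp (2 * τ) * Real.tanh r ^ 2 < 1) (Nstar : ℝ) (hNstar : 0 ≤ Nstar) :
    (∑' n : ℕ, if Nstar < 2 * (n : ℝ) then
        (Nat.choose (m + n - 1) n : ℝ) * (Real.cosh r ^ (2 * m))⁻¹ *
          Real.tanh r ^ (2 * n)
      else 0)
      ≤ Real.exp (-τ * Nstar) *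
          ((Real.cosh r ^ 2)⁻¹ / (1 - Real.exp (2 * τ) * Real.tanh r ^ 2)) ^ m := by
  set t : ℝ := Real.tanh r ^ 2 with ht
  set x : ℝ := Real.exp (2 * τ) * t with hx
  have ht0 : 0 ≤ t := sq_nonneg _
  have hx0 : 0 ≤ x := mul_nonneg (Real.exp_pos _).le ht0
  have hx1 : x < 1 := hτt
  have hxn : ‖x‖ < 1 := by rwa [Real.norm_eq_abs, abs_of_nonneg hx0]
  have hc : (0:ℝ) < Real.cosh r ^ (2 * m) := pow_pos (Real.cosh_pos r) _
  have hchoose : ∀ n : ℕ, (m + n - 1).choose n = (n + (m - 1)).choose (m - 1) := by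
    intro n
    have h1 : m + n - 1 = n + (m - 1) := by omega
    rw [h1, ← Nat.choose_symm (Nat.le_add_right n (m-1))]
    congr 1
    omega
  have hsum : HasSum (fun n : ℕ => ((n + (m-1)).choose (m-1) : ℝ) * x ^ n)
      (1 / (1 - x) ^ ((m-1) + 1)) := hasSum_choose_mul_geometric_of_norm_lt_one _ hxn
  have hm1 : (m - 1) + 1 = m := by omega
  rw [hm1] at hsum
  set g : ℕ → ℝ := fun n =>
    Real.exp (-τ * Nstar) * ((Real.cosh r ^ (2 * m))⁻¹ *
      (((n + (m-1)).choose (m-1) : ℝ) * x ^ n)) with hg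
  have hgsum : HasSum g (Real.exp (-τ * Nstar) * ((Real.cosh r ^ (2 * m))⁻¹ *
      (1 / (1 - x) ^ m))) := (hsum.mul_left _).mul_left _
  have hle : ∀ n : ℕ, (if Nstar < 2 * (n : ℝ) then
      ((m + n - 1).choose n : ℝ) * (Real.cosh r ^ (2 * m))⁻¹ * Real.tanh r ^ (2 * n)
      else 0) ≤ g n := by
    intro n
    have htn : Real.tanh r ^ (2 * n) = t ^ n := by rw [pow_mul]
    by_cases h : Nstar < 2 * (n : ℝ)
    · simp only [h, if_true, hg]
      rw [hchoose n, htn]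
      have hxe : x ^ n = Real.exp (2 * τ * n) * t ^ n := by
        rw [hx, mul_pow, ← Real.exp_nat_mul]
        ring_nf
      rw [hxe]
      have h1 : t ^ n ≤ Real.exp (-τ * Nstar) * (Real.exp (2 * τ * n) * t ^ n) := by
        rw [← mul_assoc, ← Real.exp_add]
        have : (0:ℝ) ≤ -τ * Nstar + 2 * τ * n := by nlinarith
        nlinarith [Real.one_le_exp this, pow_nonneg ht0 n,
          mul_le_mul_of_nonneg_right (Real.one_le_exp this) (pow_nonneg ht0 n)]
      calc ((n + (m-1)).choose (m-1) : ℝ) * (Real.cosh r ^ (2 * m))⁻¹ * t ^ n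
          ≤ ((n + (m-1)).choose (m-1) : ℝ) * (Real.cosh r ^ (2 * m))⁻¹ *
            (Real.exp (-τ * Nstar) * (Real.exp (2 * τ * n) * t ^ n)) := by
            apply mul_le_mul_of_nonneg_left h1
            positivity
        _ = Real.exp (-τ * Nstar) * ((Real.cosh r ^ (2 * m))⁻¹ *
            (((n + (m-1)).choose (m-1) : ℝ) * (Real.exp (2 * τ * n) * t ^ n))) := by ring
    · simp only [h, if_false, hg]
      positivity
  have hf0 : ∀ n : ℕ, (0:ℝ) ≤ (if Nstar < 2 * (n : ℝ) then
      ((m + n - 1).choose n : ℝ) * (Real.cosh r ^ (2 * m))⁻¹ * Real.tanh r ^ (2 * n)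
      else 0) := by
    intro n
    by_cases h : Nstar < 2 * (n : ℝ) <;> simp only [h, if_true, if_false]
    · rw [pow_mul (Real.tanh r)]; positivity
    · exact le_refl 0
  have hfsummable : Summable (fun n : ℕ => (if Nstar < 2 * (n : ℝ) then
      ((m + n - 1).choose n : ℝ) * (Real.cosh r ^ (2 * m))⁻¹ * Real.tanh r ^ (2 * n)
      else 0)) := Summable.of_nonneg_of_le hf0 hle hgsum.summable
  calc (∑' n : ℕ, if Nstar < 2 * (n : ℝ) then
        ((m + n - 1).choose n : ℝ) * (Real.cosh r ^ (2 * m))⁻¹ * Real.tanh r ^ (2 * n)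
      else 0)
      ≤ ∑' n, g n := Summable.tsum_le_tsum hle hfsummable hgsum.summable
    _ = Real.exp (-τ * Nstar) * ((Real.cosh r ^ (2 * m))⁻¹ * (1 / (1 - x) ^ m)) :=
        hgsum.tsum_eq
    _ = Real.exp (-τ * Nstar) * ((Real.cosh r ^ 2)⁻¹ / (1 - x)) ^ m := by
        rw [div_pow, pow_mul, inv_pow]
        ring
end

section
/- Let r ≠ 0 be a real number, let m ≥ 1 be a natural number, let 0 < β < 1, and let N* ≥ 0 be real. Then Σ_{n : 2n > N*} C(m+n−1, n)·(cosh r)^{−2m}·(tanh r)^{2n} ≤ (1−β)^{−m}·(1 + β/sinh²(r))^{−N*/2}. -/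
/-- Reparametrized Chernoff tail bound: for `r ≠ 0` and `0 < β < 1`, the probability
that the total photon number `2n` of `2m` squeezed vacuum states exceeds `N*` is at most
`(1−β)^{−m}·(1 + β/sinh²(r))^{−N*/2}`. -/
theorem stmt_12 (r : ℝ) (hr : r ≠ 0) (m : ℕ) (hm : 1 ≤ m) (β : ℝ) (hβ0 : 0 < β)
    (hβ1 : β < 1) (Nstar : ℝ) (hNstar : 0 ≤ Nstar) :
    (∑' n : ℕ, if Nstar < 2 * (n : ℝ) then
        (Nat.choose (m + n - 1) n : ℝ) * (Real.cosh r ^ (2 * m))⁻¹ *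
          Real.tanh r ^ (2 * n)
      else 0)
      ≤ ((1 - β) ^ m)⁻¹ * (1 + β / Real.sinh r ^ 2) ^ (-(Nstar / 2)) := by
  have hc0 : (0:ℝ) < Real.cosh r := Real.cosh_pos r
  have hs0 : Real.sinh r ≠ 0 := by simpa [Real.sinh_eq_zero] using hr
  have hs2 : 0 < Real.sinh r ^ 2 := pow_two_pos_of_ne_zero hs0
  set lam : ℝ := 1 + β / Real.sinh r ^ 2 with hlam
  have hlam1 : 1 < lam := by
    have h : 0 < β / Real.sinh r ^ 2 := div_pos hβ0 hs2
    rw [hlam]; linarith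
  set t : ℝ := Real.tanh r ^ 2 with ht
  set x : ℝ := lam * t with hxdef
  have hcsq : Real.cosh r ^ 2 = Real.sinh r ^ 2 + 1 := Real.cosh_sq r
  have hx : x = (Real.sinh r ^ 2 + β) / Real.cosh r ^ 2 := by
    rw [hxdef, ht, hlam, Real.tanh_eq_sinh_div_cosh]
    field_simp
  have hx0 : 0 ≤ x := by
    rw [hx]; positivity
  have hx1 : x < 1 := by
    rw [hx, div_lt_one (by positivity)]
    rw [hcsq]; linarith
  have h1x : 1 - x = (1 - β) / Real.cosh r ^ 2 := by
    rw [hx]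
    field_simp
    linarith [hcsq]
  set L : ℝ := lam ^ (-(Nstar / 2)) with hL
  have hL0 : 0 < L := Real.rpow_pos_of_pos (by linarith) _
  set cinv : ℝ := (Real.cosh r ^ (2 * m))⁻¹ with hcinv
  have hcinv0 : 0 < cinv := by positivity
  set g : ℕ → ℝ := fun n => L * (cinv * (((n + (m-1)).choose (m-1) : ℝ) * x ^ n)) with hg
  have hxnorm : ‖x‖ < 1 := by rw [Real.norm_eq_abs, abs_of_nonneg hx0]; exact hx1
  have hsumg : Summable g := by
    exact ((summable_choose_mul_geometric_of_norm_lt_one (m-1) hxnorm).mul_left cinv).mul_left L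
  have hch : ∀ n : ℕ, ((m + n - 1).choose n : ℝ) = (((n + (m-1)).choose (m-1) : ℕ) : ℝ) := by
    intro n
    have h1 : m + n - 1 = n + (m - 1) := by omega
    have h2 := Nat.choose_symm (Nat.le_add_left (m-1) n)
    rw [Nat.add_sub_cancel] at h2
    rw [h1, h2]
  have hterm : ∀ n : ℕ, (if Nstar < 2 * (n : ℝ) then
        ((m + n - 1).choose n : ℝ) * cinv * Real.tanh r ^ (2 * n) else 0) ≤ g n := by
    intro n
    split_ifs with h
    · have htn : Real.tanh r ^ (2 * n) = t ^ n := by rw [ht, pow_mul]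
      rw [htn, hch n, hg]
      have hlampow : (1:ℝ) ≤ L * lam ^ n := by
        have : L * lam ^ n = lam ^ ((n : ℝ) - Nstar / 2) := by
          rw [hL, ← Real.rpow_natCast lam n, ← Real.rpow_add (by linarith)]
          ring_nf
        rw [this]
        apply Real.one_le_rpow (by linarith)
        linarith
      have hx_eq : x ^ n = lam ^ n * t ^ n := by rw [hxdef, mul_pow]
      have ht0 : 0 ≤ t := by rw [ht]; positivity
      have key : ((n + (m-1)).choose (m-1) : ℝ) * cinv * t ^ n
          ≤ (L * lam ^ n) * (((n + (m-1)).choose (m-1) : ℝ) * cinv * t ^ n) := by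
        nth_rewrite 1 [← one_mul (((n + (m-1)).choose (m-1) : ℝ) * cinv * t ^ n)]
        apply mul_le_mul_of_nonneg_right hlampow
        positivity
      calc ((n + (m-1)).choose (m-1) : ℝ) * cinv * t ^ n
          ≤ (L * lam ^ n) * (((n + (m-1)).choose (m-1) : ℝ) * cinv * t ^ n) := key
        _ = L * (cinv * (((n + (m-1)).choose (m-1) : ℝ) * x ^ n)) := by
            rw [hx_eq]; ring
    · rw [hg]
      have ht0 : 0 ≤ x := hx0
      positivity
  have hf0 : ∀ n : ℕ, 0 ≤ (if Nstar < 2 * (n : ℝ) then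
        ((m + n - 1).choose n : ℝ) * cinv * Real.tanh r ^ (2 * n) else 0) := by
    intro n
    split_ifs with h
    · have htn : Real.tanh r ^ (2 * n) = t ^ n := by rw [ht, pow_mul]
      rw [htn]
      have ht0 : 0 ≤ t := by rw [ht]; positivity
      positivity
    · exact le_refl 0
  have hsumf : Summable (fun n : ℕ => (if Nstar < 2 * (n : ℝ) then
        ((m + n - 1).choose n : ℝ) * cinv * Real.tanh r ^ (2 * n) else 0)) :=
    Summable.of_nonneg_of_le hf0 hterm hsumg
  have hfin : cinv * (1 / (1-x)^((m-1)+1)) = ((1-β)^m)⁻¹ := by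
    have hmm : m - 1 + 1 = m := by omega
    rw [hmm, h1x, div_pow, hcinv, pow_mul]
    have hb : ((1:ℝ)-β)^m ≠ 0 := pow_ne_zero _ (by linarith)
    have hcc : (Real.cosh r ^ 2) ^ m ≠ 0 := by positivity
    field_simp
  calc (∑' n : ℕ, if Nstar < 2 * (n : ℝ) then
        ((m + n - 1).choose n : ℝ) * cinv * Real.tanh r ^ (2 * n) else 0)
      ≤ ∑' n, g n := Summable.tsum_le_tsum hterm hsumf hsumg
    _ = L * (cinv * (1 / (1-x)^((m-1)+1))) := by
        rw [hg, tsum_mul_left, tsum_mul_left,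
          tsum_choose_mul_geometric_of_norm_lt_one _ hxnorm]
    _ = ((1 - β) ^ m)⁻¹ * L := by rw [hfin]; ring
end

section
/- Let r ≠ 0 be a real number, let m ≥ 1 and N ≥ 2 be natural numbers, let c ≥ 1 be real, and let N* be a real number satisfying N* ≥ (4 sinh²(r) + 2)·(m·log 2 + c·N·log N). Then Σ_{n : 2n > N*} C(m+n−1, n)·(cosh r)^{−2m}·(tanh r)^{2n} ≤ exp(−c·N·log N). -/
set_option maxHeartbeats 1000000


/-- Lemma 2 (quantitative form): if the cut-off `N*` satisfies
`N* ≥ (4 sinh²(r) + 2)·(m·log 2 + c·N·log N)`, then the probability that the total photon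
number `2n` of `2m` squeezed vacuum states exceeds `N*` is at most `exp(−c·N·log N)`. -/
theorem stmt_14 (r : ℝ) (hr : r ≠ 0) (m : ℕ) (hm : 1 ≤ m) (N : ℕ) (hN : 2 ≤ N)
    (c : ℝ) (hc : 1 ≤ c) (Nstar : ℝ)
    (hNstar : (4 * Real.sinh r ^ 2 + 2) * (m * Real.log 2 + c * N * Real.log N) ≤ Nstar) :
    (∑' n : ℕ, if Nstar < 2 * (n : ℝ) then
        (Nat.choose (m + n - 1) n : ℝ) * (Real.cosh r ^ (2 * m))⁻¹ *
          Real.tanh r ^ (2 * n)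
      else 0)
      ≤ Real.exp (-(c * N * Real.log N)) := by
  set s : ℝ := Real.sinh r ^ 2 with hs_def
  have hsinh : Real.sinh r ≠ 0 := Real.sinh_ne_zero.mpr hr
  have hs : 0 < s := lt_of_le_of_ne (sq_nonneg _) (Ne.symm (pow_ne_zero 2 hsinh))
  have h1s : (0:ℝ) < 1 + s := by linarith
  have hcosh : Real.cosh r ^ 2 = 1 + s := by rw [Real.cosh_sq]; ring
  have hcoshne : Real.cosh r ≠ 0 := (Real.cosh_pos r).ne'
  set t : ℝ := s / (1 + s) with ht_def
  have htanh : Real.tanh r ^ 2 = t := by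
    rw [Real.tanh_eq_sinh_div_cosh, div_pow, hcosh]
  set z : ℝ := (2 * s + 1) / (2 * s) with hz_def
  have hz1 : 1 < z := by
    rw [hz_def, lt_div_iff₀ (by linarith)]; linarith
  have hz0 : (0:ℝ) < z := by linarith
  have htz : t * z = (2 * s + 1) / (2 * (1 + s)) := by
    rw [ht_def, hz_def]; field_simp
  have htz0 : 0 ≤ t * z := by rw [htz]; positivity
  have htz1 : t * z < 1 := by
    rw [htz, div_lt_one (by linarith)]; linarith
  have h1tz : 1 - t * z = (2 * (1 + s))⁻¹ := by
    rw [htz]; field_simp; ring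
  -- logs
  have hlogN : 0 < Real.log N :=
    Real.log_pos (by exact_mod_cast (by omega : 1 < N))
  have hE : 0 < (m : ℝ) * Real.log 2 + c * N * Real.log N := by
    have h2 : (0:ℝ) < Real.log 2 := Real.log_pos one_lt_two
    have hm' : (1:ℝ) ≤ (m:ℝ) := by exact_mod_cast hm
    have hN' : (2:ℝ) ≤ (N:ℝ) := by exact_mod_cast hN
    have hp1 : 0 < (m:ℝ) * Real.log 2 := mul_pos (by linarith) h2
    have hp2 : 0 < c * N * Real.log N :=
      mul_pos (mul_pos (by linarith) (by linarith)) hlogN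
    linarith
  have hNstar0 : 0 < Nstar := lt_of_lt_of_le (by nlinarith [hE, hs]) hNstar
  set k : ℕ := m - 1 with hk_def
  have hmk : m = k + 1 := by omega
  set A : ℝ := z ^ (-(Nstar / 2)) with hA_def
  have hA0 : 0 < A := Real.rpow_pos_of_pos hz0 _
  set C0 : ℝ := A * (((1 + s) ^ m)⁻¹) with hC0_def
  have hC00 : 0 ≤ C0 := by positivity
  set f : ℕ → ℝ := fun n => if Nstar < 2 * (n : ℝ) then
        (Nat.choose (m + n - 1) n : ℝ) * (Real.cosh r ^ (2 * m))⁻¹ *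
          Real.tanh r ^ (2 * n) else 0 with hf_def
  set g : ℕ → ℝ := fun n => C0 * (((n + k).choose k : ℝ) * (t * z) ^ n) with hg_def
  have hnorm : ‖t * z‖ < 1 := by rw [Real.norm_eq_abs, abs_of_nonneg htz0]; exact htz1
  have hgsum : Summable g :=
    (summable_choose_mul_geometric_of_norm_lt_one k hnorm).mul_left C0
  have hf0 : ∀ n, 0 ≤ f n := by
    intro n
    simp only [hf_def]
    split
    · have h1 : (0:ℝ) ≤ (Real.cosh r ^ (2 * m))⁻¹ := by positivity
      have h2 : (0:ℝ) ≤ Real.tanh r ^ (2 * n) := by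
        rw [pow_mul, htanh]
        positivity
      positivity
    · exact le_rfl
  have hfg : ∀ n, f n ≤ g n := by
    intro n
    simp only [hf_def, hg_def]
    split
    · rename_i hn
      have hchoose : ((m + n - 1).choose n : ℝ) = ((n + k).choose k : ℝ) := by
        have : m + n - 1 = n + k := by omega
        rw [this, Nat.choose_symm_add]
      have hcosh2m : Real.cosh r ^ (2 * m) = (1 + s) ^ m := by
        rw [pow_mul, hcosh]
      have htanh2n : Real.tanh r ^ (2 * n) = t ^ n := by
        rw [pow_mul, htanh]
      rw [hchoose, hcosh2m, htanh2n]
      have hzn : t ^ n = (t * z) ^ n * z ^ (-(n : ℝ)) := by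
        rw [Real.rpow_neg hz0.le, Real.rpow_natCast, mul_pow]
        field_simp
      have hzle : z ^ (-(n : ℝ)) ≤ A := by
        apply Real.rpow_le_rpow_of_exponent_le hz1.le
        have : Nstar / 2 < (n : ℝ) := by linarith
        linarith
      calc ((n + k).choose k : ℝ) * ((1 + s) ^ m)⁻¹ * t ^ n
          = (((n + k).choose k : ℝ) * ((1 + s) ^ m)⁻¹ * (t * z) ^ n) * z ^ (-(n : ℝ)) := by
            rw [hzn]; ring
        _ ≤ (((n + k).choose k : ℝ) * ((1 + s) ^ m)⁻¹ * (t * z) ^ n) * A := by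
            apply mul_le_mul_of_nonneg_left hzle
            have : (0:ℝ) ≤ (t*z)^n := pow_nonneg htz0 n
            positivity
        _ = C0 * (((n + k).choose k : ℝ) * (t * z) ^ n) := by rw [hC0_def]; ring
    · positivity
  have hfsum : Summable f := Summable.of_nonneg_of_le hf0 hfg hgsum
  have htsum_g : ∑' n, g n = A * 2 ^ m := by
    rw [hg_def, tsum_mul_left, tsum_choose_mul_geometric_of_norm_lt_one k hnorm]
    rw [h1tz, ← hmk]
    rw [hC0_def]
    have h1 : (1:ℝ) / (((2 * (1 + s))⁻¹) ^ m) = 2 ^ m * (1 + s) ^ m := by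
      rw [inv_pow, one_div, inv_inv, mul_pow]
    rw [h1, mul_assoc]
    congr 1
    have h2m : ((1 + s):ℝ) ^ m ≠ 0 := by positivity
    field_simp
  have key : ∑' n, f n ≤ A * 2 ^ m := htsum_g ▸ Summable.tsum_le_tsum hfg hfsum hgsum
  refine le_trans key ?_
  -- A * 2^m ≤ exp(-(c N log N))
  have hlogz : (2 * s + 1)⁻¹ ≤ Real.log z := by
    have h1 : Real.log z⁻¹ ≤ z⁻¹ - 1 := Real.log_le_sub_one_of_pos (by positivity)
    rw [Real.log_inv] at h1
    have hzinv : z⁻¹ = 2 * s / (2 * s + 1) := by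
      rw [hz_def, inv_div]
    rw [hzinv] at h1
    have h4 : 1 - 2 * s / (2 * s + 1) = (2 * s + 1)⁻¹ := by
      rw [eq_div_iff (by linarith : (2*s+1:ℝ) ≠ 0)] at *
      field_simp
      ring
    linarith
  have hA_exp : A = Real.exp (Real.log z * (-(Nstar / 2))) := by
    rw [hA_def, Real.rpow_def_of_pos hz0]
  have h2m_exp : (2:ℝ) ^ m = Real.exp ((m : ℝ) * Real.log 2) := by
    rw [← Real.log_pow, Real.exp_log (by positivity)]
  rw [hA_exp, h2m_exp, ← Real.exp_add]
  apply Real.exp_le_exp.mpr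
  -- need: log z * (-(Nstar/2)) + m * log 2 ≤ -(c N log N)
  -- i.e. m log 2 + c N log N ≤ (Nstar/2) * log z
  have hstep : (m : ℝ) * Real.log 2 + c * N * Real.log N ≤ Nstar / 2 * Real.log z := by
    have h1 : (2 * s + 1) * ((m : ℝ) * Real.log 2 + c * N * Real.log N) ≤ Nstar / 2 := by
      linarith
    have h2 : (m : ℝ) * Real.log 2 + c * N * Real.log N
        = ((2 * s + 1) * ((m : ℝ) * Real.log 2 + c * N * Real.log N)) * (2 * s + 1)⁻¹ := by
      field_simp
    rw [h2]
    apply mul_le_mul h1 hlogz (by positivity) (by linarith [hNstar0])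
  linarith
end
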